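/- arXiv:1911.00966 — 6 statements merged into one kernel-verified Lean document; each statement's English description precedes it below -/
import Mathlib

section
/- (Lemma 3.2) Let n ≥ 1 and let v, v' : Fin (n+1) → ℝⁿ be points with v(i) ≠ v(0) and v'(i) ≠ v'(0) for all i ≠ 0. Suppose u : Fin (n+1) → ℝ satisfies dist(v'(i), v'(j)) = exp((u(i)+u(j))/2)·dist(v(i), v(j)) for all i ≠ j. Define w(i) = inv_{v(0),1}(v(i)) and w'(i) = inv_{v'(0),1}(v'(i)) for i ≠ 0. Then for all i, j ≠ 0, dist(w'(i), w'(j)) = exp(−u(0))·dist(w(i), w(j)). -/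
/-!
Inversion in a sphere of radius `R` about `c` multiplies distances by the factor
`R ^ 2 / (dist x c * dist y c)`. Under the conformal change of distances
`dist (v' i) (v' j) = exp ((u i + u j) / 2) * dist (v i) (v j)` the factors `exp (u i / 2)`,
`exp (u j / 2)` of the numerator `dist x y` cancel against those of the denominator, leaving
only `exp (-u 0)` from the two distances to the centre.
-/

/-- Inversion in the sphere of center `p` and radius `R`. -/
noncomputable def sphInv {n : ℕ} (p : EuclideanSpace ℝ (Fin n)) (R : ℝ)
    (x : EuclideanSpace ℝ (Fin n)) : EuclideanSpace ℝ (Fin n) :=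
  p + (R ^ 2 / (dist x p) ^ 2) • (x - p)

open EuclideanGeometry

theorem sphInv_eq_inversion {n : ℕ} (p : EuclideanSpace ℝ (Fin n)) (R : ℝ)
    (x : EuclideanSpace ℝ (Fin n)) : sphInv p R x = inversion p R x := by
  simp only [sphInv, inversion, div_pow, vsub_eq_sub, vadd_eq_add]
  ring_nf
  abel

theorem dist_inversion_inversion_eq_exp_neg_mul
    {V P V' P' : Type*} [NormedAddCommGroup V] [InnerProductSpace ℝ V] [MetricSpace P]
    [NormedAddTorsor V P] [NormedAddCommGroup V'] [InnerProductSpace ℝ V'] [MetricSpace P']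
    [NormedAddTorsor V' P'] {c x y : P} {c' x' y' : P'} {a b s : ℝ} (R : ℝ)
    (hx : x ≠ c) (hy : y ≠ c)
    (hxy : dist x' y' = Real.exp ((a + b) / 2) * dist x y)
    (hxc : dist x' c' = Real.exp ((a + s) / 2) * dist x c)
    (hyc : dist y' c' = Real.exp ((b + s) / 2) * dist y c) :
    dist (inversion c' R x') (inversion c' R y') =
      Real.exp (-s) * dist (inversion c R x) (inversion c R y) := by
  have hx' : x' ≠ c' := dist_pos.1 (hxc ▸ mul_pos (Real.exp_pos _) (dist_pos.2 hx))
  have hy' : y' ≠ c' := dist_pos.1 (hyc ▸ mul_pos (Real.exp_pos _) (dist_pos.2 hy))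
  have hexp : Real.exp ((a + s) / 2) * Real.exp ((b + s) / 2) =
      Real.exp ((a + b) / 2) * Real.exp s := by
    rw [← Real.exp_add, ← Real.exp_add]; ring_nf
  have hxc₀ : dist x c ≠ 0 := dist_ne_zero.2 hx
  have hyc₀ : dist y c ≠ 0 := dist_ne_zero.2 hy
  rw [dist_inversion_inversion hx' hy', dist_inversion_inversion hx hy, hxy, hxc, hyc,
    mul_mul_mul_comm, hexp, Real.exp_neg]
  field_simp

theorem inverted_configurations_similar_general {n : ℕ}
    (v v' : Fin (n + 1) → EuclideanSpace ℝ (Fin n))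
    (hv : ∀ i, i ≠ 0 → v i ≠ v 0)
    (u : Fin (n + 1) → ℝ)
    (h : ∀ i j, i ≠ j → dist (v' i) (v' j) = Real.exp ((u i + u j) / 2) * dist (v i) (v j)) :
    ∀ i j, i ≠ 0 → j ≠ 0 →
      dist (sphInv (v' 0) 1 (v' i)) (sphInv (v' 0) 1 (v' j)) =
        Real.exp (-(u 0)) * dist (sphInv (v 0) 1 (v i)) (sphInv (v 0) 1 (v j)) := by
  intro i j hi hj
  rcases eq_or_ne i j with rfl | hij
  · simp
  simp only [sphInv_eq_inversion]
  exact dist_inversion_inversion_eq_exp_neg_mul 1 (hv i hi) (hv j hj) (h i j hij) (h i 0 hi)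
    (h j 0 hj)

/-- Lemma 3.2: if the vertex tuples `v` and `v'` are discretely conformally related with
scale factors `e^u`, then inverting in the unit spheres centered at `v 0` and `v' 0`
produces configurations `w`, `w'` that are similar with ratio `e^{-u 0}`. -/
theorem inverted_configurations_similar {n : ℕ} (hn : 1 ≤ n)
    (v v' : Fin (n + 1) → EuclideanSpace ℝ (Fin n))
    (hv : ∀ i, i ≠ 0 → v i ≠ v 0) (hv' : ∀ i, i ≠ 0 → v' i ≠ v' 0)
    (u : Fin (n + 1) → ℝ)
    (h : ∀ i j, i ≠ j → dist (v' i) (v' j) = Real.exp ((u i + u j) / 2) * dist (v i) (v j)) :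
    ∀ i j, i ≠ 0 → j ≠ 0 →
      dist (sphInv (v' 0) 1 (v' i)) (sphInv (v' 0) 1 (v' j)) =
        Real.exp (-(u 0)) * dist (sphInv (v 0) 1 (v i)) (sphInv (v 0) 1 (v j)) :=
  inverted_configurations_similar_general v v' hv u h
end

section
/- (Remark 2.5, symmetry of the local Delaunay condition) Let n ≥ 1 and let v : Fin (n+2) → ℝⁿ be points such that the tuple (v(0), …, v(n)) is affinely independent with associated n-simplex σ, the tuple (v(1), …, v(n+1)) is affinely independent with associated n-simplex σ', and v(0) and v(n+1) lie strictly on opposite sides of the affine hyperplane spanned by v(1), …, v(n). Then v(0) lies in the open ball bounded by the circumsphere of σ' if and only if v(n+1) lies in the open ball bounded by the circumsphere of σ; that is, dist(v(0), circumcenter(σ')) < circumradius(σ') if and only if dist(v(n+1), circumcenter(σ)) < circumradius(σ). -/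
/-!
The difference `h` of the powers of a point with respect to two spheres is an affine function of
the point. For the circumspheres of `σ` and `σ'` it vanishes on the common face, hence on its affine
span, and at the two apexes it equals `-pow_σ'(v 0)` and `pow_σ(v (n+1))`. Some point strictly
between the apexes lies in that span, so `(1 - t) h (v 0) + t h (v (n+1)) = 0` with `0 < t < 1`,
and the two values have opposite strict signs or both vanish.
-/

namespace AffineSubspace

variable {R V P : Type*} [Field R] [LinearOrder R] [IsStrictOrderedRing R] [AddCommGroup V]
  [Module R V] [AddTorsor V P]

theorem SOppSide.apply_pos_iff_apply_neg {s : AffineSubspace R P} {x y : P}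
    (h : s.SOppSide x y) {f : P →ᵃ[R] R} (hf : ∀ p ∈ s, f p = 0) : 0 < f x ↔ f y < 0 := by
  obtain ⟨p, hp, hxpy⟩ := h.exists_sbtw
  obtain ⟨t, ⟨ht₀, ht₁⟩, rfl⟩ := hxpy.mem_image_Ioo
  have hcomb : (1 - t) * f x + t * f y = 0 := by
    rw [← hf _ hp, f.apply_lineMap, AffineMap.lineMap_apply_module, smul_eq_mul, smul_eq_mul]
  constructor <;> intro hpos <;> nlinarith

end AffineSubspace

namespace EuclideanGeometry.Sphere

variable {V P : Type*} [NormedAddCommGroup V] [InnerProductSpace ℝ V] [MetricSpace P]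
  [NormedAddTorsor V P]

noncomputable def powerSub (s₁ s₂ : Sphere P) : P →ᵃ[ℝ] ℝ where
  toFun p := s₁.power p - s₂.power p
  linear := 2 • innerₗ V (s₂.center -ᵥ s₁.center)
  map_vadd' p w := by
    rw [← vsub_sub_vsub_cancel_left s₂.center s₁.center p]
    simp only [power, dist_eq_norm_vsub V, vadd_vsub_assoc, norm_add_sq_real,
      LinearMap.smul_apply, innerₗ_apply_apply, nsmul_eq_mul, Nat.cast_ofNat, vadd_eq_add,
      inner_sub_right, real_inner_comm w]
    ring

theorem powerSub_apply (s₁ s₂ : Sphere P) (p : P) :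
    s₁.powerSub s₂ p = s₁.power p - s₂.power p := rfl

theorem power_eq_power_of_mem_affineSpan {s₁ s₂ : Sphere P} {S : Set P}
    (h₁ : S ⊆ s₁) (h₂ : S ⊆ s₂) {p : P} (hp : p ∈ affineSpan ℝ S) :
    s₁.power p = s₂.power p := by
  have hS : S.EqOn (s₁.powerSub s₂) (AffineMap.const ℝ P 0) := fun q hq ↦ by
    simp [powerSub_apply, power, mem_sphere.1 (h₁ hq), mem_sphere.1 (h₂ hq)]
  simpa [powerSub_apply, sub_eq_zero] using AffineMap.eqOn_affineSpan hS hp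

theorem dist_center_lt_radius_iff_of_sOppSide {s₁ s₂ : Sphere P} {S : Set P}
    (h₁ : S ⊆ s₁) (h₂ : S ⊆ s₂) {x y : P} (hx : x ∈ s₁) (hy : y ∈ s₂)
    (hxy : (affineSpan ℝ S).SOppSide x y) :
    dist x s₂.center < s₂.radius ↔ dist y s₁.center < s₁.radius := by
  have hsign := hxy.apply_pos_iff_apply_neg (f := s₁.powerSub s₂) fun p hp ↦
    sub_eq_zero.2 (power_eq_power_of_mem_affineSpan h₁ h₂ hp)
  have hx₁ : s₁.power x = 0 := (power_eq_zero_iff_mem_sphere (radius_nonneg_of_mem hx)).2 hx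
  have hy₂ : s₂.power y = 0 := (power_eq_zero_iff_mem_sphere (radius_nonneg_of_mem hy)).2 hy
  rw [powerSub_apply, powerSub_apply, hx₁, hy₂, zero_sub, sub_zero, neg_pos] at hsign
  rwa [← power_neg_iff_dist_center_lt_radius (radius_nonneg_of_mem hy),
    ← power_neg_iff_dist_center_lt_radius (radius_nonneg_of_mem hx)]

end EuclideanGeometry.Sphere

theorem delaunay_condition_symmetric_general {n : ℕ}
    (v : Fin (n + 2) → EuclideanSpace ℝ (Fin n))
    (hσ : AffineIndependent ℝ (fun i : Fin (n + 1) => v i.castSucc))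
    (hσ' : AffineIndependent ℝ (fun i : Fin (n + 1) => v i.succ))
    (hopp : (affineSpan ℝ (Set.range fun i : Fin n => v i.succ.castSucc)).SOppSide
      (v 0) (v (Fin.last (n + 1)))) :
    (dist (v 0) (Affine.Simplex.circumcenter ⟨fun i : Fin (n + 1) => v i.succ, hσ'⟩) <
        Affine.Simplex.circumradius ⟨fun i : Fin (n + 1) => v i.succ, hσ'⟩) ↔
    (dist (v (Fin.last (n + 1)))
        (Affine.Simplex.circumcenter ⟨fun i : Fin (n + 1) => v i.castSucc, hσ⟩) <
      Affine.Simplex.circumradius ⟨fun i : Fin (n + 1) => v i.castSucc, hσ⟩) := by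
  set σ : Affine.Simplex ℝ (EuclideanSpace ℝ (Fin n)) n := ⟨fun i => v i.castSucc, hσ⟩
  set σ' : Affine.Simplex ℝ (EuclideanSpace ℝ (Fin n)) n := ⟨fun i => v i.succ, hσ'⟩
  have hface : Set.range (fun i : Fin n => v i.succ.castSucc) ⊆ σ.circumsphere := by
    rintro - ⟨i, rfl⟩
    exact σ.mem_circumsphere i.succ
  have hface' : Set.range (fun i : Fin n => v i.succ.castSucc) ⊆ σ'.circumsphere := by
    rintro - ⟨i, rfl⟩
    exact σ'.mem_circumsphere i.castSucc
  have hfirst : v 0 ∈ σ.circumsphere := σ.mem_circumsphere 0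
  have hlast : v (Fin.last (n + 1)) ∈ σ'.circumsphere := σ'.mem_circumsphere (Fin.last n)
  simpa only [Affine.Simplex.circumsphere_center, Affine.Simplex.circumsphere_radius] using
    EuclideanGeometry.Sphere.dist_center_lt_radius_iff_of_sOppSide hface hface' hfirst hlast hopp

/-- Remark 2.5: if two `n`-simplices `σ = [v 0, …, v n]` and `σ' = [v 1, …, v (n+1)]` in
`ℝⁿ` share the common `(n-1)`-face `[v 1, …, v n]` and the opposite vertices `v 0`,
`v (n+1)` lie strictly on opposite sides of the hyperplane spanned by that face, then
`v 0` lies inside the circumsphere of `σ'` iff `v (n+1)` lies inside the circumsphere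
of `σ`. -/
theorem delaunay_condition_symmetric {n : ℕ} (hn : 1 ≤ n)
    (v : Fin (n + 2) → EuclideanSpace ℝ (Fin n))
    (hσ : AffineIndependent ℝ (fun i : Fin (n + 1) => v i.castSucc))
    (hσ' : AffineIndependent ℝ (fun i : Fin (n + 1) => v i.succ))
    (hopp : (affineSpan ℝ (Set.range fun i : Fin n => v i.succ.castSucc)).SOppSide
      (v 0) (v (Fin.last (n + 1)))) :
    (dist (v 0) (Affine.Simplex.circumcenter ⟨fun i : Fin (n + 1) => v i.succ, hσ'⟩) <
        Affine.Simplex.circumradius ⟨fun i : Fin (n + 1) => v i.succ, hσ'⟩) ↔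
    (dist (v (Fin.last (n + 1)))
        (Affine.Simplex.circumcenter ⟨fun i : Fin (n + 1) => v i.castSucc, hσ⟩) <
      Affine.Simplex.circumradius ⟨fun i : Fin (n + 1) => v i.castSucc, hσ⟩) :=
  delaunay_condition_symmetric_general v hσ hσ' hopp
end

section
/- (Existence of a similarity realizing a distance-proportional correspondence) Let n ≥ 1, let ι be any index set, let w, w' : ι → ℝⁿ, and let λ > 0 satisfy dist(w'(i), w'(j)) = λ·dist(w(i), w(j)) for all i, j. Then there exists a bijection F : ℝⁿ → ℝⁿ with dist(F x, F y) = λ·dist(x, y) for all x, y ∈ ℝⁿ, such that F(w(i)) = w'(i) for all i. -/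
/-!
Rescaling `w'` by `λ⁻¹` turns the similarity problem into a congruence problem. For congruent
families, the polarization identity shows that the vectors from a base point have the same Gram
matrix, so corresponding linear combinations have equal norms. This gives a well-defined linear
isometry between the two spans, which extends to the whole finite-dimensional space.
-/

open Finsupp RealInnerProductSpace

section LinearCombination

variable {ι E F : Type*} [NormedAddCommGroup E] [InnerProductSpace ℝ E]
  [NormedAddCommGroup F] [InnerProductSpace ℝ F] {v : ι → E} {u : ι → F}

theorem norm_linearCombination_eq_of_inner_eq (h : ∀ i j, ⟪v i, v j⟫ = ⟪u i, u j⟫)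
    (f : ι →₀ ℝ) : ‖linearCombination ℝ v f‖ = ‖linearCombination ℝ u f‖ := by
  have hinner : ⟪linearCombination ℝ v f, linearCombination ℝ v f⟫ =
      ⟪linearCombination ℝ u f, linearCombination ℝ u f⟫ := by
    simp only [linearCombination_apply, Finsupp.sum_inner, Finsupp.inner_sum,
      real_inner_smul_left, real_inner_smul_right, h]
  rw [real_inner_self_eq_norm_sq, real_inner_self_eq_norm_sq] at hinner
  exact (sq_eq_sq₀ (norm_nonneg _) (norm_nonneg _)).mp hinner

theorem exists_linearIsometry_range_linearCombination (h : ∀ i j, ⟪v i, v j⟫ = ⟪u i, u j⟫) :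
    ∃ L : LinearMap.range (linearCombination ℝ v) →ₗᵢ[ℝ] F,
      ∀ f, L ⟨_, LinearMap.mem_range_self _ f⟩ = linearCombination ℝ u f := by
  set φ := linearCombination ℝ v
  set ψ := linearCombination ℝ u
  have hnorm := norm_linearCombination_eq_of_inner_eq h
  have hker : LinearMap.ker φ ≤ LinearMap.ker ψ := fun f hf => by
    rw [LinearMap.mem_ker, ← norm_eq_zero, ← hnorm, norm_eq_zero]
    exact hf
  set T := (LinearMap.ker φ).liftQ ψ hker ∘ₗ (φ.quotKerEquivRange).symm.toLinearMap
  have hT : ∀ f, T ⟨φ f, LinearMap.mem_range_self φ f⟩ = ψ f := fun f => by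
    have : φ.quotKerEquivRange (Submodule.Quotient.mk f) = ⟨φ f, LinearMap.mem_range_self φ f⟩ :=
      Subtype.ext (φ.quotKerEquivRange_apply_mk f)
    simp [T, ← this]
  refine ⟨⟨T, ?_⟩, hT⟩
  rintro ⟨_, f, rfl⟩
  rw [hT, ← hnorm]
  rfl

end LinearCombination

theorem exists_linearIsometryEquiv_of_inner_eq {ι E : Type*} [NormedAddCommGroup E]
    [InnerProductSpace ℝ E] [FiniteDimensional ℝ E] {v u : ι → E}
    (h : ∀ i j, ⟪v i, v j⟫ = ⟪u i, u j⟫) : ∃ L : E ≃ₗᵢ[ℝ] E, ∀ i, L (v i) = u i := by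
  obtain ⟨L, hL⟩ := exists_linearIsometry_range_linearCombination h
  refine ⟨L.extend.toLinearIsometryEquiv rfl, fun i => ?_⟩
  simpa using (L.extend_apply _).trans (hL (single i 1))

theorem Congruent.inner_vsub_vsub_eq {ι V₁ V₂ P₁ P₂ : Type*} [NormedAddCommGroup V₁]
    [InnerProductSpace ℝ V₁] [MetricSpace P₁] [NormedAddTorsor V₁ P₁] [NormedAddCommGroup V₂]
    [InnerProductSpace ℝ V₂] [MetricSpace P₂] [NormedAddTorsor V₂ P₂] {v : ι → P₁} {u : ι → P₂}
    (h : Congruent v u) (i j k : ι) : ⟪v i -ᵥ v k, v j -ᵥ v k⟫ = ⟪u i -ᵥ u k, u j -ᵥ u k⟫ := by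
  simp only [real_inner_eq_norm_mul_self_add_norm_mul_self_sub_norm_sub_mul_self_div_two,
    vsub_sub_vsub_cancel_right, ← dist_eq_norm_vsub, h.dist_eq]

theorem Congruent.exists_affineIsometryEquiv {ι V P : Type*} [NormedAddCommGroup V]
    [InnerProductSpace ℝ V] [FiniteDimensional ℝ V] [MetricSpace P] [NormedAddTorsor V P]
    {v u : ι → P} (h : Congruent v u) : ∃ A : P ≃ᵃⁱ[ℝ] P, ∀ i, A (v i) = u i := by
  cases isEmpty_or_nonempty ι with
  | inl _ => exact ⟨.refl ℝ P, isEmptyElim⟩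
  | inr hι =>
    obtain ⟨k⟩ := hι
    obtain ⟨L, hL⟩ := exists_linearIsometryEquiv_of_inner_eq (h.inner_vsub_vsub_eq · · k)
    refine ⟨(AffineIsometryEquiv.vaddConst ℝ (v k)).symm.trans
      (L.toAffineIsometryEquiv.trans (AffineIsometryEquiv.vaddConst ℝ (u k))), fun i => ?_⟩
    simp [hL]

theorem exists_similarity_extending_general {n : ℕ} {ι : Type*}
    (w w' : ι → EuclideanSpace ℝ (Fin n)) (lam : ℝ) (hlam : 0 < lam)
    (h : ∀ i j, dist (w' i) (w' j) = lam * dist (w i) (w j)) :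
    ∃ F : EuclideanSpace ℝ (Fin n) → EuclideanSpace ℝ (Fin n),
      Function.Bijective F ∧ (∀ x y, dist (F x) (F y) = lam * dist x y) ∧
      ∀ i, F (w i) = w' i := by
  have hcong : Congruent w (lam⁻¹ • w') := Congruent.of_dist_eq fun i j => by
    simp [dist_smul₀, h, abs_of_pos hlam, hlam.ne']
  obtain ⟨A, hA⟩ := hcong.exists_affineIsometryEquiv
  refine ⟨fun x => lam • A x, ?_, fun x y => ?_, fun i => ?_⟩
  · exact (MulAction.bijective (Units.mk0 lam hlam.ne')).comp A.bijective
  · simp [dist_smul₀, abs_of_pos hlam]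
  · simp [hA, hlam.ne']

/-- Any correspondence `w i ↦ w' i` that scales all mutual distances by a fixed ratio
`λ > 0` extends to a bijective similarity of `ℝⁿ` with ratio `λ`. -/
theorem exists_similarity_extending {n : ℕ} (hn : 1 ≤ n) {ι : Type*}
    (w w' : ι → EuclideanSpace ℝ (Fin n)) (lam : ℝ) (hlam : 0 < lam)
    (h : ∀ i j, dist (w' i) (w' j) = lam * dist (w i) (w j)) :
    ∃ F : EuclideanSpace ℝ (Fin n) → EuclideanSpace ℝ (Fin n),
      Function.Bijective F ∧ (∀ x y, dist (F x) (F y) = lam * dist x y) ∧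
      ∀ i, F (w i) = w' i :=
  exists_similarity_extending_general w w' lam hlam h
end

section
/- (Exactly two similarities through n affinely independent points, one of each orientation) Let n ≥ 1, let w : Fin n → ℝⁿ be affinely independent, let w' : Fin n → ℝⁿ, and let λ > 0 satisfy dist(w'(i), w'(j)) = λ·dist(w(i), w(j)) for all i, j. Then there exist exactly two affine maps F : ℝⁿ → ℝⁿ with dist(F x, F y) = λ·dist(x, y) for all x, y and F(w(i)) = w'(i) for all i; moreover exactly one of these two maps has linear part with positive determinant (orientation-preserving) and the other has linear part with negative determinant (orientation-reversing). -/
open Module Submodule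

local notation "⟪" x ", " y "⟫" => @inner ℝ _ _ x y

section helpers

variable {E : Type*} [NormedAddCommGroup E] [InnerProductSpace ℝ E]

lemma aux_polar {lam : ℝ} (a b a' b' : E) (h1 : ‖a'‖ = lam * ‖a‖)
    (h2 : ‖b'‖ = lam * ‖b‖) (h3 : ‖a' - b'‖ = lam * ‖a - b‖) :
    ⟪a', b'⟫ = lam ^ 2 * ⟪a, b⟫ := by
  have e1 := norm_sub_sq_real a b
  have e2 := norm_sub_sq_real a' b'
  rw [h1, h2, h3] at e2
  have e1' := congrArg (fun t => lam ^ 2 * t) e1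
  nlinarith [e1', e2]

lemma aux_mem_orth {ι : Type*} (v : ι → E) (a : E) (h : ∀ i, ⟪v i, a⟫ = 0) :
    a ∈ (span ℝ (Set.range v))ᗮ := by
  have h1 : span ℝ (Set.range v) ≤ (ℝ ∙ a)ᗮ := by
    rw [Submodule.span_le]
    rintro _ ⟨i, rfl⟩
    simp only [SetLike.mem_coe]
    rw [Submodule.mem_orthogonal_singleton_iff_inner_left]
    exact h i
  exact Submodule.orthogonal_le h1
    ((ℝ ∙ a).le_orthogonal_orthogonal (Submodule.mem_span_singleton_self a))

end helpers

set_option maxHeartbeats 2000000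
/-- Given `n` affinely independent points `w i` in `ℝⁿ` and points `w' i` whose mutual
distances are `λ` times those of the `w i`, there are exactly two affine similarities of
ratio `λ` sending each `w i` to `w' i`: one orientation-preserving and one
orientation-reversing. -/
theorem exactly_two_affine_similarities {n : ℕ} (hn : 1 ≤ n)
    (w : Fin n → EuclideanSpace ℝ (Fin n)) (hw : AffineIndependent ℝ w)
    (w' : Fin n → EuclideanSpace ℝ (Fin n)) (lam : ℝ) (hlam : 0 < lam)
    (h : ∀ i j, dist (w' i) (w' j) = lam * dist (w i) (w j)) :
    ∃ F₁ F₂ : EuclideanSpace ℝ (Fin n) →ᵃ[ℝ] EuclideanSpace ℝ (Fin n),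
      F₁ ≠ F₂ ∧
      (∀ x y, dist (F₁ x) (F₁ y) = lam * dist x y) ∧ (∀ i, F₁ (w i) = w' i) ∧
      (∀ x y, dist (F₂ x) (F₂ y) = lam * dist x y) ∧ (∀ i, F₂ (w i) = w' i) ∧
      0 < LinearMap.det F₁.linear ∧ LinearMap.det F₂.linear < 0 ∧
      ∀ F : EuclideanSpace ℝ (Fin n) →ᵃ[ℝ] EuclideanSpace ℝ (Fin n),
        (∀ x y, dist (F x) (F y) = lam * dist x y) → (∀ i, F (w i) = w' i) →
        F = F₁ ∨ F = F₂ := by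
  classical
  have hlam0 : lam ≠ 0 := ne_of_gt hlam
  set i0 : Fin n := ⟨0, hn⟩ with hi0
  set p := w i0 with hp
  set p' := w' i0 with hp'
  set v : {i : Fin n // i ≠ i0} → EuclideanSpace ℝ (Fin n) := fun i => w i - p with hvdef
  set v' : {i : Fin n // i ≠ i0} → EuclideanSpace ℝ (Fin n) := fun i => w' i - p' with hv'def
  have hvind : LinearIndependent ℝ v := by
    have := (affineIndependent_iff_linearIndependent_vsub ℝ w i0).mp hw
    simpa [hvdef, vsub_eq_sub] using this
  have hnorm : ∀ i j : Fin n, ‖w' i - w' j‖ = lam * ‖w i - w j‖ := by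
    intro i j; have := h i j; rwa [dist_eq_norm, dist_eq_norm] at this
  have hinner : ∀ i j, ⟪v' i, v' j⟫ = lam ^ 2 * ⟪v i, v j⟫ := by
    intro i j
    refine aux_polar (v i) (v j) (v' i) (v' j) (hnorm i i0) (hnorm j i0) ?_
    have e : v' i - v' j = w' ↑i - w' ↑j := sub_sub_sub_cancel_right _ _ _
    have e2 : v i - v j = w ↑i - w ↑j := sub_sub_sub_cancel_right _ _ _
    rw [e, e2]; exact hnorm i j
  -- the span of the差 vectors
  set S : Submodule ℝ (EuclideanSpace ℝ (Fin n)) := span ℝ (Set.range v) with hS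
  let b : Basis _ ℝ S := Basis.span hvind
  let f : S →ₗ[ℝ] EuclideanSpace ℝ (Fin n) := b.constr ℝ (fun i => lam⁻¹ • v' i)
  have hf_b : ∀ i, f (b i) = lam⁻¹ • v' i := fun i => b.constr_basis ℝ _ i
  have hb_coe : ∀ i, ((b i : S) : EuclideanSpace ℝ (Fin n)) = v i := fun i =>
    congrArg Subtype.val (Module.Basis.span_apply hvind i)
  have hfinner : ∀ x y : S, ⟪f x, f y⟫ = ⟪(x : EuclideanSpace ℝ (Fin n)), (y : EuclideanSpace ℝ (Fin n))⟫ := by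
    let B1 : S →ₗ[ℝ] S →ₗ[ℝ] ℝ := LinearMap.mk₂ ℝ (fun x y => ⟪f x, f y⟫)
      (fun x x' y => by show ⟪f (x + x'), f y⟫ = ⟪f x, f y⟫ + ⟪f x', f y⟫; rw [map_add, inner_add_left])
      (fun c x y => by show ⟪f (c • x), f y⟫ = c • ⟪f x, f y⟫; rw [map_smul, real_inner_smul_left, smul_eq_mul])
      (fun x y y' => by show ⟪f x, f (y + y')⟫ = ⟪f x, f y⟫ + ⟪f x, f y'⟫; rw [map_add, inner_add_right])
      (fun c x y => by show ⟪f x, f (c • y)⟫ = c • ⟪f x, f y⟫; rw [map_smul, real_inner_smul_right, smul_eq_mul])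
    let B2 : S →ₗ[ℝ] S →ₗ[ℝ] ℝ := LinearMap.mk₂ ℝ
      (fun x y => ⟪(x : EuclideanSpace ℝ (Fin n)), (y : EuclideanSpace ℝ (Fin n))⟫)
      (fun x x' y => by show ⟪((x + x' : S) : EuclideanSpace ℝ (Fin n)), (y : EuclideanSpace ℝ (Fin n))⟫ = _ + _; rw [Submodule.coe_add, inner_add_left])
      (fun c x y => by show ⟪((c • x : S) : EuclideanSpace ℝ (Fin n)), (y : EuclideanSpace ℝ (Fin n))⟫ = c • _; rw [Submodule.coe_smul, real_inner_smul_left, smul_eq_mul])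
      (fun x y y' => by show ⟪(x : EuclideanSpace ℝ (Fin n)), ((y + y' : S) : EuclideanSpace ℝ (Fin n))⟫ = _ + _; rw [Submodule.coe_add, inner_add_right])
      (fun c x y => by show ⟪(x : EuclideanSpace ℝ (Fin n)), ((c • y : S) : EuclideanSpace ℝ (Fin n))⟫ = c • _; rw [Submodule.coe_smul, real_inner_smul_right, smul_eq_mul])
    have hBB : B1 = B2 := by
      apply LinearMap.ext_basis b b
      intro i j
      show ⟪f (b i), f (b j)⟫ = ⟪((b i : S) : EuclideanSpace ℝ (Fin n)), ((b j : S) : EuclideanSpace ℝ (Fin n))⟫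
      rw [hf_b, hf_b, hb_coe, hb_coe, real_inner_smul_left, real_inner_smul_right, hinner]
      field_simp
    intro x y
    exact LinearMap.congr_fun (LinearMap.congr_fun hBB x) y
  have hfnorm : ∀ x : S, ‖f x‖ = ‖x‖ := by
    intro x
    have h1 : ‖f x‖ ^ 2 = ‖(x : EuclideanSpace ℝ (Fin n))‖ ^ 2 := by
      rw [← real_inner_self_eq_norm_sq, ← real_inner_self_eq_norm_sq, hfinner]
    have h2 : ‖(x : EuclideanSpace ℝ (Fin n))‖ = ‖x‖ := rfl
    rw [← h2]
    nlinarith [norm_nonneg (f x), norm_nonneg (x : EuclideanSpace ℝ (Fin n))]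
  let fL : S →ₗᵢ[ℝ] EuclideanSpace ℝ (Fin n) := ⟨f, hfnorm⟩
  let L : EuclideanSpace ℝ (Fin n) →ₗᵢ[ℝ] EuclideanSpace ℝ (Fin n) := fL.extend
  have hL : ∀ i, L (v i) = lam⁻¹ • v' i := by
    intro i
    have h2 := fL.extend_apply (b i)
    rw [hb_coe i] at h2
    rw [h2]; exact hf_b i
  have hLv' : ∀ i, lam • L (v i) = v' i := by
    intro i; rw [hL, smul_smul, mul_inv_cancel₀ hlam0, one_smul]
  set T : EuclideanSpace ℝ (Fin n) →ₗ[ℝ] EuclideanSpace ℝ (Fin n) := lam • L.toLinearMap with hTdef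
  have hT : ∀ z, T z = lam • L z := fun z => rfl
  let F₁ : EuclideanSpace ℝ (Fin n) →ᵃ[ℝ] EuclideanSpace ℝ (Fin n) :=
    { toFun := fun x => lam • L (x - p) + p'
      linear := T
      map_vadd' := by
        intro q z
        simp only [vadd_eq_add, hT]
        rw [add_sub_assoc, map_add, smul_add]
        abel }
  have hF₁app : ∀ x, F₁ x = lam • L (x - p) + p' := fun _ => rfl
  have hF₁lin : F₁.linear = T := rfl
  have hF₁dist : ∀ x y, dist (F₁ x) (F₁ y) = lam * dist x y := by
    intro x y
    rw [dist_eq_norm, dist_eq_norm, hF₁app, hF₁app]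
    have e : (lam • L (x - p) + p') - (lam • L (y - p) + p') = lam • L (x - y) := by
      rw [add_sub_add_right_eq_sub, ← smul_sub, ← map_sub, sub_sub_sub_cancel_right]
    rw [e, norm_smul, L.norm_map, Real.norm_eq_abs, abs_of_pos hlam]
  have hF₁w : ∀ i, F₁ (w i) = w' i := by
    intro i
    by_cases hi : i = i0
    · subst hi; rw [hF₁app]; simp [← hp, ← hp']
    · have e : w i - p = v ⟨i, hi⟩ := rfl
      rw [hF₁app, e, hLv' ⟨i, hi⟩]
      show w' i - p' + p' = w' i
      rw [sub_add_cancel]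
  have hF₁p : F₁ p = p' := hF₁w i0
  -- the reflection
  set S' : Submodule ℝ (EuclideanSpace ℝ (Fin n)) := span ℝ (Set.range v') with hS'
  have hv'mem : ∀ i, v' i ∈ S' := fun i => subset_span ⟨i, rfl⟩
  set ρ := reflection S' with hρ
  let A : EuclideanSpace ℝ (Fin n) →ᵃ[ℝ] EuclideanSpace ℝ (Fin n) :=
    { toFun := fun x => ρ (x - p') + p'
      linear := ρ.toLinearMap
      map_vadd' := by
        intro q z
        show ρ (z + q - p') + p' = ρ z + (ρ (q - p') + p')
        rw [add_sub_assoc, map_add]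
        abel }
  have hAapp : ∀ x, A x = ρ (x - p') + p' := fun _ => rfl
  have hAlin : A.linear = ρ.toLinearMap := rfl
  have hAfix : ∀ i, A (w' i) = w' i := by
    intro i
    by_cases hi : i = i0
    · subst hi; rw [hAapp]; simp [← hp']
    · rw [hAapp]
      have e : w' i - p' = v' ⟨i, hi⟩ := rfl
      rw [e, reflection_mem_subspace_eq_self (hv'mem ⟨i, hi⟩)]
      show w' i - p' + p' = w' i
      rw [sub_add_cancel]
  have hAsub : ∀ x y, A x - A y = ρ (x - y) := by
    intro x y
    rw [hAapp, hAapp, add_sub_add_right_eq_sub, ← map_sub, sub_sub_sub_cancel_right]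
  let F₂ := A.comp F₁
  have hF₂lin : F₂.linear = ρ.toLinearMap.comp T := rfl
  have hF₂app : ∀ x, F₂ x = A (F₁ x) := fun _ => rfl
  have hF₂dist : ∀ x y, dist (F₂ x) (F₂ y) = lam * dist x y := by
    intro x y
    rw [dist_eq_norm, hF₂app, hF₂app, hAsub, ρ.norm_map, ← dist_eq_norm, hF₁dist]
  have hF₂w : ∀ i, F₂ (w i) = w' i := by
    intro i; rw [hF₂app, hF₁w, hAfix]
  have hF₂p : F₂ p = p' := hF₂w i0
  have hTv : ∀ i, T (v i) = v' i := fun i => (hT _).trans (hLv' i)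
  have hF₂linv : ∀ i, F₂.linear (v i) = v' i := by
    intro i
    rw [hF₂lin]
    show ρ (T (v i)) = v' i
    rw [hTv, reflection_mem_subspace_eq_self (hv'mem i)]
  -- dimension counting
  have hcard : Fintype.card {i : Fin n // i ≠ i0} = n - 1 := by
    rw [Fintype.card_subtype_compl, Fintype.card_subtype_eq, Fintype.card_fin]
  have hfinE : finrank ℝ (EuclideanSpace ℝ (Fin n)) = n := finrank_euclideanSpace_fin
  have hSrank : finrank ℝ S = n - 1 := by
    rw [hS, finrank_span_eq_card hvind, hcard]
  have hTinj : Function.Injective T := by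
    intro x y hxy
    rw [hT, hT] at hxy
    exact L.injective (smul_right_injective _ hlam0 hxy)
  have hv'ind : LinearIndependent ℝ v' := by
    have h1 := hvind.map' T (LinearMap.ker_eq_bot.mpr hTinj)
    have h2 : ⇑T ∘ v = v' := funext fun i => hTv i
    rwa [h2] at h1
  have hS'rank : finrank ℝ S' = n - 1 := by
    rw [hS', finrank_span_eq_card hv'ind, hcard]
  have hSorth : finrank ℝ Sᗮ = 1 := by
    have h1 := S.finrank_add_finrank_orthogonal
    rw [hfinE, hSrank] at h1
    omega
  have hS'orth : finrank ℝ S'ᗮ = 1 := by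
    have h1 := S'.finrank_add_finrank_orthogonal
    rw [hfinE, hS'rank] at h1
    omega
  obtain ⟨u, huS, hu0⟩ : ∃ u ∈ Sᗮ, u ≠ 0 := by
    have hne : Sᗮ ≠ ⊥ := by
      intro h0
      rw [h0, finrank_bot] at hSorth
      omega
    exact Submodule.exists_mem_ne_zero_of_ne_bot hne
  -- properties shared by every similarity mapping w to w'
  have key : ∀ F : EuclideanSpace ℝ (Fin n) →ᵃ[ℝ] EuclideanSpace ℝ (Fin n),
      (∀ x y, dist (F x) (F y) = lam * dist x y) → (∀ i, F (w i) = w' i) →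
      (∀ i, F.linear (v i) = v' i) ∧ F.linear u ∈ S'ᗮ ∧ ‖F.linear u‖ = lam * ‖u‖ ∧ F p = p' := by
    intro F hFd hFw
    have hFsub : ∀ x y, F x - F y = F.linear (x - y) := by
      intro x y
      have h1 := F.map_vadd y (x - y)
      rw [vadd_eq_add, sub_add_cancel, vadd_eq_add] at h1
      rw [h1, add_sub_cancel_right]
    have hFnorm : ∀ z, ‖F.linear z‖ = lam * ‖z‖ := by
      intro z
      have h1 := hFd (z + p) p
      rw [dist_eq_norm, dist_eq_norm, hFsub, add_sub_cancel_right] at h1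
      simpa using h1
    have hFinner : ∀ a c, ⟪F.linear a, F.linear c⟫ = lam ^ 2 * ⟪a, c⟫ := by
      intro a c
      exact aux_polar a c _ _ (hFnorm a) (hFnorm c) (by rw [← map_sub]; exact hFnorm _)
    have hFp : F p = p' := hFw i0
    have hFv : ∀ i, F.linear (v i) = v' i := by
      intro i
      have h1 := hFsub (w i) p
      rw [hFw, hFp] at h1
      exact h1.symm
    refine ⟨hFv, ?_, hFnorm u, hFp⟩
    rw [hS']
    apply aux_mem_orth
    intro i
    have h2 := (Submodule.mem_orthogonal S u).mp huS (v i) (subset_span ⟨i, rfl⟩)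
    rw [← hFv i, hFinner, h2, mul_zero]
  obtain ⟨hF₁v, hF₁uS', hF₁unorm, _⟩ := key F₁ hF₁dist hF₁w
  set b₁ := F₁.linear u with hb₁def
  have hb₁0 : b₁ ≠ 0 := by
    intro h0
    rw [h0, norm_zero] at hF₁unorm
    have : ‖u‖ ≠ 0 := norm_ne_zero_iff.mpr hu0
    have := mul_ne_zero hlam0 this
    exact this hF₁unorm.symm
  have hF₂u : F₂.linear u = -b₁ := by
    rw [hF₂lin]
    show ρ (T u) = -b₁
    have : T u = b₁ := rfl
    rw [this, hρ]
    exact reflection_mem_subspace_orthogonalComplement_eq_neg hF₁uS'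
  have hspan_b₁ : S'ᗮ = ℝ ∙ b₁ := by
    refine (Submodule.eq_of_le_of_finrank_eq ?_ ?_).symm
    · rw [Submodule.span_le, Set.singleton_subset_iff]
      exact hF₁uS'
    · rw [finrank_span_singleton hb₁0, hS'orth]
  have hSo : Sᗮ = ℝ ∙ u := by
    refine (Submodule.eq_of_le_of_finrank_eq ?_ ?_).symm
    · rw [Submodule.span_le, Set.singleton_subset_iff]
      exact huS
    · rw [finrank_span_singleton hu0, hSorth]
  have linext : ∀ g₁ g₂ : EuclideanSpace ℝ (Fin n) →ₗ[ℝ] EuclideanSpace ℝ (Fin n),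
      (∀ i, g₁ (v i) = g₂ (v i)) → g₁ u = g₂ u → g₁ = g₂ := by
    intro g₁ g₂ hgv hgu
    apply LinearMap.ext
    intro x
    have hx : x ∈ S ⊔ Sᗮ := by
      rw [Submodule.sup_orthogonal_of_hasOrthogonalProjection]
      trivial
    obtain ⟨s, hs, t, ht, rfl⟩ := Submodule.mem_sup.mp hx
    rw [hSo, Submodule.mem_span_singleton] at ht
    obtain ⟨c', rfl⟩ := ht
    have hsS : g₁ s = g₂ s := by
      refine LinearMap.eqOn_span ?_ hs
      rintro _ ⟨i, rfl⟩
      exact hgv i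
    rw [map_add, map_add, map_smul, map_smul, hgu, hsS]
  have affext : ∀ G₁ G₂ : EuclideanSpace ℝ (Fin n) →ᵃ[ℝ] EuclideanSpace ℝ (Fin n),
      G₁.linear = G₂.linear → G₁ p = G₂ p → G₁ = G₂ := by
    intro G₁ G₂ hl hpp
    ext x
    have h1 := G₁.map_vadd p (x - p)
    have h2 := G₂.map_vadd p (x - p)
    rw [vadd_eq_add, sub_add_cancel] at h1 h2
    rw [h1, h2, hl, hpp]
  have hne : F₁ ≠ F₂ := by
    intro hEq
    have h1 : F₁.linear u = F₂.linear u := by rw [hEq]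
    rw [hF₂u, ← hb₁def] at h1
    have h2 : b₁ + b₁ = 0 := by
      nth_rewrite 2 [h1]
      exact add_neg_cancel b₁
    have h3 : (2 : ℝ) • b₁ = 0 := by rw [two_smul]; exact h2
    rcases smul_eq_zero.mp h3 with h4 | h4
    · norm_num at h4
    · exact hb₁0 h4
  have huniq : ∀ F : EuclideanSpace ℝ (Fin n) →ᵃ[ℝ] EuclideanSpace ℝ (Fin n),
      (∀ x y, dist (F x) (F y) = lam * dist x y) → (∀ i, F (w i) = w' i) →
      F = F₁ ∨ F = F₂ := by
    intro F hFd hFw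
    obtain ⟨hFv, hFuS', hFun, hFp⟩ := key F hFd hFw
    have hmem : F.linear u ∈ ℝ ∙ b₁ := by rw [← hspan_b₁]; exact hFuS'
    obtain ⟨c, hc⟩ := Submodule.mem_span_singleton.mp hmem
    have hcabs : |c| = 1 := by
      have h1 : ‖F.linear u‖ = |c| * ‖b₁‖ := by
        rw [← hc, norm_smul, Real.norm_eq_abs]
      rw [hFun, hF₁unorm] at h1
      have h2 : lam * ‖u‖ ≠ 0 := mul_ne_zero hlam0 (norm_ne_zero_iff.mpr hu0)
      have h3 : |c| * (lam * ‖u‖) = 1 * (lam * ‖u‖) := by rw [← h1, one_mul]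
      exact mul_right_cancel₀ h2 h3
    rcases (abs_eq (by norm_num : (0:ℝ) ≤ 1)).mp hcabs with hc1 | hc1
    · left
      refine affext F F₁ ?_ (hFp.trans hF₁p.symm)
      refine linext _ _ (fun i => by rw [hFv i, hF₁v i]) ?_
      rw [← hc, hc1, one_smul, hb₁def]
    · right
      refine affext F F₂ ?_ (hFp.trans hF₂p.symm)
      refine linext _ _ (fun i => by rw [hFv i, hF₂linv i]) ?_
      rw [← hc, hc1, hF₂u, neg_smul, one_smul]
  -- determinants
  have hdet₁ : LinearMap.det F₁.linear ≠ 0 := by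
    rw [hF₁lin, hTdef, LinearMap.det_smul]
    have hdetL : LinearMap.det L.toLinearMap ≠ 0 := by
      set Le := L.toLinearIsometryEquiv rfl with hLe
      have hcoe : L.toLinearMap = (Le.toLinearEquiv : EuclideanSpace ℝ (Fin n) →ₗ[ℝ] EuclideanSpace ℝ (Fin n)) := by
        apply LinearMap.ext
        intro x
        exact (congrFun (L.coe_toLinearIsometryEquiv rfl) x).symm
      rw [hcoe]
      exact (LinearEquiv.isUnit_det' Le.toLinearEquiv).ne_zero
    exact mul_ne_zero (pow_ne_zero _ hlam0) hdetL
  have hdetρ : LinearMap.det ρ.toLinearMap = -1 := by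
    rw [hρ, det_reflection, hS'orth, pow_one]
  have hdet₂ : LinearMap.det F₂.linear = - LinearMap.det F₁.linear := by
    rw [hF₂lin, LinearMap.det_comp, hdetρ, hF₁lin]
    ring
  rcases lt_trichotomy (LinearMap.det F₁.linear) 0 with hcase | hcase | hcase
  · refine ⟨F₂, F₁, hne.symm, hF₂dist, hF₂w, hF₁dist, hF₁w, ?_, hcase, ?_⟩
    · rw [hdet₂]; linarith
    · intro F hd hw2
      exact (huniq F hd hw2).symm
  · exact absurd hcase hdet₁
  · refine ⟨F₁, F₂, hne, hF₁dist, hF₁w, hF₂dist, hF₂w, hcase, ?_, huniq⟩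
    rw [hdet₂]; linarith
end

section
/- (Affine independence is preserved by inversion at a vertex) Let n ≥ 1 and let v : Fin (n+1) → ℝⁿ be affinely independent. Then the n points w(i) = inv_{v(0),1}(v(i)), for i ∈ {1, …, n}, are affinely independent. -/
lemma linearIndependent_affineIndependent {m : ℕ} {ι : Type*}
    {y : ι → EuclideanSpace ℝ (Fin m)} (h : LinearIndependent ℝ y) :
    AffineIndependent ℝ y := by
  rw [affineIndependent_iff]
  intro s w hw hsum i hi
  have := linearIndependent_iff'.1 h s w hsum
  exact this i hi

/-- Inverting the vertices `v 1, …, v n` of an `n`-simplex in the unit sphere centered at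
the remaining vertex `v 0` yields `n` affinely independent points. -/
theorem affineIndependent_inverted_vertices {n : ℕ} (hn : 1 ≤ n)
    (v : Fin (n + 1) → EuclideanSpace ℝ (Fin n)) (hv : AffineIndependent ℝ v) :
    AffineIndependent ℝ (fun i : Fin n => sphInv (v 0) 1 (v i.succ)) := by
  have h0 : ∀ i : Fin n, v i.succ ≠ v 0 := fun i => hv.injective.ne (Fin.succ_ne_zero i)
  -- linear independence of the differences
  have hx0 := (affineIndependent_iff_linearIndependent_vsub ℝ v 0).1 hv
  let e : Fin n ≃ {x : Fin (n + 1) // x ≠ 0} :=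
    { toFun := fun i => ⟨i.succ, Fin.succ_ne_zero i⟩
      invFun := fun x => x.1.pred (by exact x.2)
      left_inv := fun i => by simp
      right_inv := fun x => by simp }
  have hx : LinearIndependent ℝ (fun i : Fin n => v i.succ -ᵥ v 0) := by
    have := hx0.comp e e.injective
    convert this using 1
    all_goals rfl
  -- scale by nonzero constants
  let u : Fin n → ℝˣ := fun i =>
    Units.mk0 (1 ^ 2 / dist (v i.succ) (v 0) ^ 2) (by
      have : dist (v i.succ) (v 0) ≠ 0 := dist_ne_zero.2 (h0 i)
      positivity)
  have hy : LinearIndependent ℝ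
      (fun i : Fin n => (1 ^ 2 / dist (v i.succ) (v 0) ^ 2 : ℝ) • (v i.succ - v 0)) := by
    have := hx.units_smul u
    convert this using 1
    rfl
  have hay : AffineIndependent ℝ
      (fun i : Fin n => (1 ^ 2 / dist (v i.succ) (v 0) ^ 2 : ℝ) • (v i.succ - v 0)) :=
    linearIndependent_affineIndependent hy
  have := hay.vadd (v := v 0)
  convert this using 1
  rfl
end

section
/- (Lemma 3.3, concrete form) Let n ≥ 2 and let v, v' : Fin (n+1) → ℝⁿ each be affinely independent, with associated n-simplices σ and σ'. Let λ₁, λ₂ > 0 and let F₁, F₂ : ℝⁿ → ℝⁿ be surjective maps with dist(F_k x, F_k y) = λ_k·dist(x, y) for all x, y (k = 1, 2), with F₁ ≠ F₂, and suppose F_k(inv_{v(0),1}(v(i))) = inv_{v'(0),1}(v'(i)) for all i ≠ 0 and k = 1, 2. Let C = inv_{o,R} be the inversion in the circumsphere of σ, where o = circumcenter(σ) and R = circumradius(σ). Then for every x ∈ ℝⁿ with x ≠ v(0), x ≠ o, F₂(inv_{v(0),1}(x)) ≠ v'(0), and F₁(inv_{v(0),1}(C(x))) ≠ v'(0), one has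 inv_{v'(0),1}(F₂(inv_{v(0),1}(x))) = inv_{v'(0),1}(F₁(inv_{v(0),1}(C(x)))). -/
open RealInnerProductSpace

section Helpers

variable {n : ℕ}

lemma sphInv_def' (p : EuclideanSpace ℝ (Fin n)) (R : ℝ) (x : EuclideanSpace ℝ (Fin n)) :
    sphInv p R x = p + (R ^ 2 / ‖x - p‖ ^ 2) • (x - p) := by
  rw [sphInv, dist_eq_norm]

lemma sphInv_sub (p : EuclideanSpace ℝ (Fin n)) (R : ℝ) (x : EuclideanSpace ℝ (Fin n)) :
    sphInv p R x - p = (R ^ 2 / ‖x - p‖ ^ 2) • (x - p) := by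
  rw [sphInv_def']; abel

lemma norm_sphInv_sub (p : EuclideanSpace ℝ (Fin n)) (R : ℝ) {x : EuclideanSpace ℝ (Fin n)}
    (hx : x ≠ p) : ‖sphInv p R x - p‖ = R ^ 2 / ‖x - p‖ := by
  have h : ‖x - p‖ ≠ 0 := by simpa [sub_eq_zero] using hx
  have h0 : 0 < ‖x - p‖ := lt_of_le_of_ne (norm_nonneg _) (Ne.symm h)
  rw [sphInv_sub, norm_smul, Real.norm_eq_abs, abs_div, abs_of_nonneg (sq_nonneg R),
    abs_of_nonneg (sq_nonneg _)]
  field_simp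

lemma sphInv_ne (p : EuclideanSpace ℝ (Fin n)) {R : ℝ} (hR : R ≠ 0)
    {x : EuclideanSpace ℝ (Fin n)} (hx : x ≠ p) : sphInv p R x ≠ p := by
  intro h
  have h1 : ‖sphInv p R x - p‖ = R ^ 2 / ‖x - p‖ := norm_sphInv_sub p R hx
  have h2 : ‖x - p‖ ≠ 0 := by simpa [sub_eq_zero] using hx
  rw [h, sub_self, norm_zero] at h1
  rcases div_eq_zero_iff.mp h1.symm with h3 | h3
  · exact hR (pow_eq_zero_iff (by norm_num) |>.mp h3)
  · exact h2 h3

lemma sphInv_invol (p : EuclideanSpace ℝ (Fin n)) {R : ℝ} (hR : R ≠ 0)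
    {x : EuclideanSpace ℝ (Fin n)} (hx : x ≠ p) : sphInv p R (sphInv p R x) = x := by
  have h : ‖x - p‖ ≠ 0 := by simpa [sub_eq_zero] using hx
  rw [sphInv_def' p R (sphInv p R x), norm_sphInv_sub p R hx, sphInv_sub, smul_smul]
  have : R ^ 2 / (R ^ 2 / ‖x - p‖) ^ 2 * (R ^ 2 / ‖x - p‖ ^ 2) = 1 := by
    field_simp
  rw [this, one_smul]; abel

/-- Key algebraic identity: inversion in a sphere of radius `R` through `p`, conjugated by the
unit inversion at `p`, is the reflection in the hyperplane `⟪y - p, o - p⟫ = 1/2`. -/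
lemma sphInv_conj (p o x : EuclideanSpace ℝ (Fin n)) {R : ℝ} (hR : 0 < R)
    (hpo : dist p o = R) (hx : x ≠ p) (hxo : x ≠ o) :
    sphInv p 1 (sphInv o R x) =
      sphInv p 1 x - ((2 * ⟪sphInv p 1 x - p, o - p⟫ - 1) / R ^ 2) • (o - p) := by
  set X := x - p with hX
  set A := o - p with hA
  have hAA : ⟪A, A⟫ = R ^ 2 := by
    rw [real_inner_self_eq_norm_sq, hA, ← dist_eq_norm, dist_comm, hpo]
  have hAn : ‖A‖ ^ 2 = R ^ 2 := by rw [← real_inner_self_eq_norm_sq, hAA]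
  have hXne : X ≠ 0 := by rw [hX, sub_ne_zero]; exact hx
  have hs : (0:ℝ) < ‖X‖ ^ 2 := pow_pos (norm_pos_iff.mpr hXne) 2
  set s := ‖X‖ ^ 2 with hsdef
  set t := ⟪X, A⟫ with ht
  have hXA : x - o = X - A := by rw [hX, hA]; abel
  have hq : ‖x - o‖ ^ 2 = s - 2 * t + R ^ 2 := by
    rw [hXA, norm_sub_sq_real, hsdef, ← hAn]
  have hqpos : (0:ℝ) < s - 2 * t + R ^ 2 := by
    rw [← hq]
    exact pow_pos (norm_pos_iff.mpr (sub_ne_zero.mpr hxo)) 2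
  have hnXA : ‖X - A‖ ^ 2 = s - 2 * t + R ^ 2 := by rw [← hXA, hq]
  have hy : sphInv o R x - p = A + (R ^ 2 / (s - 2 * t + R ^ 2)) • (X - A) := by
    rw [sphInv_def', ← hq, hXA, hX, hA]; abel
  have e1 : ⟪A, X - A⟫ = t - R ^ 2 := by
    rw [inner_sub_right, hAA, ht, real_inner_comm]
  have hyn : ‖sphInv o R x - p‖ ^ 2 = R ^ 2 * s / (s - 2 * t + R ^ 2) := by
    rw [hy, norm_add_sq_real, real_inner_smul_right, e1, norm_smul, mul_pow,
      Real.norm_eq_abs, sq_abs, hnXA, hAn]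
    field_simp
    ring
  have lhs : sphInv p 1 (sphInv o R x) =
      p + ((s - 2 * t + R ^ 2) / (R ^ 2 * s)) •
        (A + (R ^ 2 / (s - 2 * t + R ^ 2)) • (X - A)) := by
    rw [sphInv_def', hyn, hy, one_pow, one_div_div]
  have hux : sphInv p 1 x - p = (1 / s) • X := by
    rw [sphInv_def']; simp [hsdef, hX]
  have huxi : ⟪sphInv p 1 x - p, A⟫ = t / s := by
    rw [hux, real_inner_smul_left, ← ht]; ring
  rw [lhs, huxi, sphInv_def' p 1 x, ← hX,
    show (1:ℝ) ^ 2 / ‖X‖ ^ 2 = 1 / s by rw [hsdef]; ring]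
  have h1 : s ≠ 0 := hs.ne'
  have h2 : s - 2 * t + R ^ 2 ≠ 0 := hqpos.ne'
  have h3 : R ≠ 0 := hR.ne'
  match_scalars <;> field_simp <;> ring

end Helpers

set_option maxHeartbeats 1000000 in
/-- Lemma 3.3, concrete form: if the two distinct Möbius transformations
`T_k = inv_{v' 0,1} ∘ F_k ∘ inv_{v 0,1}` (k = 1, 2), with `F_k` similarities, both map the
vertices of the `n`-simplex `σ = [v 0, …, v n]` to those of `σ' = [v' 0, …, v' n]`, then
`T₂ = T₁ ∘ C`, where `C` is the inversion in the circumsphere of `σ`. -/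
theorem two_mobius_related_by_circumsphere_inversion {n : ℕ} (hn : 2 ≤ n)
    (v v' : Fin (n + 1) → EuclideanSpace ℝ (Fin n))
    (hv : AffineIndependent ℝ v) (hv' : AffineIndependent ℝ v')
    (lam₁ lam₂ : ℝ) (hlam₁ : 0 < lam₁) (hlam₂ : 0 < lam₂)
    (F₁ F₂ : EuclideanSpace ℝ (Fin n) → EuclideanSpace ℝ (Fin n))
    (hF₁s : Function.Surjective F₁) (hF₂s : Function.Surjective F₂)
    (hF₁ : ∀ x y, dist (F₁ x) (F₁ y) = lam₁ * dist x y)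
    (hF₂ : ∀ x y, dist (F₂ x) (F₂ y) = lam₂ * dist x y)
    (hne : F₁ ≠ F₂)
    (hmap₁ : ∀ i, i ≠ 0 → F₁ (sphInv (v 0) 1 (v i)) = sphInv (v' 0) 1 (v' i))
    (hmap₂ : ∀ i, i ≠ 0 → F₂ (sphInv (v 0) 1 (v i)) = sphInv (v' 0) 1 (v' i)) :
    ∀ x : EuclideanSpace ℝ (Fin n),
      x ≠ v 0 →
      x ≠ Affine.Simplex.circumcenter (⟨v, hv⟩ : Affine.Simplex ℝ (EuclideanSpace ℝ (Fin n)) n) →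
      F₂ (sphInv (v 0) 1 x) ≠ v' 0 →
      F₁ (sphInv (v 0) 1
        (sphInv (Affine.Simplex.circumcenter (⟨v, hv⟩ : Affine.Simplex ℝ (EuclideanSpace ℝ (Fin n)) n))
          (Affine.Simplex.circumradius (⟨v, hv⟩ : Affine.Simplex ℝ (EuclideanSpace ℝ (Fin n)) n)) x)) ≠ v' 0 →
      sphInv (v' 0) 1 (F₂ (sphInv (v 0) 1 x)) =
        sphInv (v' 0) 1 (F₁ (sphInv (v 0) 1
          (sphInv (Affine.Simplex.circumcenter (⟨v, hv⟩ : Affine.Simplex ℝ (EuclideanSpace ℝ (Fin n)) n))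
            (Affine.Simplex.circumradius (⟨v, hv⟩ : Affine.Simplex ℝ (EuclideanSpace ℝ (Fin n)) n)) x))) := by
  obtain ⟨m, rfl⟩ : ∃ m, n = m + 2 := ⟨n - 2, by omega⟩
  intro x hxp hxo hd2 hd1
  clear hd2 hd1
  set σ : Affine.Simplex ℝ (EuclideanSpace ℝ (Fin (m + 2))) (m + 2) := ⟨v, hv⟩ with hσ
  set p := v 0 with hp
  set o := σ.circumcenter with ho
  set R := σ.circumradius with hRdef
  -- index facts
  have h10 : (1 : Fin (m + 3)) ≠ 0 := by simp [Fin.ext_iff]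
  have h20 : (2 : Fin (m + 3)) ≠ 0 := by simp [Fin.ext_iff, Nat.mod_eq_of_lt (show 2 < m + 3 by omega)]
  have h12 : (1 : Fin (m + 3)) ≠ 2 := by simp [Fin.ext_iff, Nat.mod_eq_of_lt (show 2 < m + 3 by omega)]
  -- span is everything
  have hspan : affineSpan ℝ (Set.range v) = ⊤ := by
    rw [hv.affineSpan_eq_top_iff_card_eq_finrank_add_one]
    simp
  have hdist : ∀ i, dist (v i) o = R := fun i => σ.dist_circumcenter_eq_circumradius i
  have hRpos : 0 < R := by
    have h01 : v 0 ≠ v 1 := hv.injective.ne (by simp [Fin.ext_iff])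
    have hpos : 0 < dist (v 0) (v 1) := dist_pos.mpr h01
    have htri := dist_triangle (v 0) o (v 1)
    have e1 : dist o (v 1) = R := by rw [dist_comm]; exact hdist 1
    rw [hdist 0, e1] at htri
    linarith
  have hvne : ∀ i : Fin (m + 3), i ≠ 0 → v i ≠ p := fun i hi => hv.injective.ne hi
  have hpo : dist p o = R := hdist 0
  set a := o - p with ha
  have haR : ‖a‖ = R := by rw [ha, ← dist_eq_norm, dist_comm]; exact hpo
  have haa : ⟪a, a⟫ = R ^ 2 := by rw [real_inner_self_eq_norm_sq, haR]
  have ha0 : a ≠ 0 := by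
    intro h; rw [h, norm_zero] at haR; exact hRpos.ne haR
  set P : Fin (m + 3) → EuclideanSpace ℝ (Fin (m + 2)) := fun i => sphInv p 1 (v i) with hPdef
  have hPhalf : ∀ i, i ≠ (0 : Fin (m + 3)) → ⟪P i - p, a⟫ = 1 / 2 := by
    intro i hi
    have hvip : v i ≠ p := hvne i hi
    have hd : (0:ℝ) < ‖v i - p‖ ^ 2 := pow_pos (norm_pos_iff.mpr (sub_ne_zero.mpr hvip)) 2
    have h1 : P i - p = ((1:ℝ) ^ 2 / ‖v i - p‖ ^ 2) • (v i - p) := sphInv_sub p 1 (v i)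
    have h2 : ‖v i - o‖ ^ 2 = R ^ 2 := by rw [← dist_eq_norm, hdist i]
    have h3 : v i - o = (v i - p) - a := by rw [ha]; abel
    have h4 : ⟪v i - p, a⟫ = ‖v i - p‖ ^ 2 / 2 := by
      rw [h3, norm_sub_sq_real] at h2
      have hAn : ‖a‖ ^ 2 = R ^ 2 := by rw [haR]
      rw [hAn] at h2
      linarith
    rw [h1, real_inner_smul_left, h4, one_pow]
    field_simp
    exact div_self (norm_ne_zero_iff.mpr (sub_ne_zero.mpr hvip))
  -- the two similarity ratios agree
  have hP12 : P 1 ≠ P 2 := by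
    intro h
    have h' := congrArg (sphInv p 1) h
    rw [hPdef] at h'
    simp only at h'
    rw [sphInv_invol p one_ne_zero (hvne 1 h10), sphInv_invol p one_ne_zero (hvne 2 h20)] at h'
    exact hv.injective.ne h12 h'
  have hdP : dist (P 1) (P 2) ≠ 0 := dist_ne_zero.mpr hP12
  have hlam : lam₁ = lam₂ := by
    have e1 := hF₁ (P 1) (P 2)
    have e2 := hF₂ (P 1) (P 2)
    rw [hmap₁ 1 h10, hmap₁ 2 h20] at e1
    rw [hmap₂ 1 h10, hmap₂ 2 h20] at e2
    exact mul_right_cancel₀ hdP (e1.symm.trans e2)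
  -- F₁ is bijective
  have hF₁inj : Function.Injective F₁ := by
    intro u w h
    have h1 := hF₁ u w
    rw [h, dist_self] at h1
    have h2 : dist u w = 0 := by
      rcases mul_eq_zero.mp h1.symm with h3 | h3
      · exact absurd h3 hlam₁.ne'
      · exact h3
    exact dist_eq_zero.mp h2
  set e₁ : EuclideanSpace ℝ (Fin (m + 2)) ≃ EuclideanSpace ℝ (Fin (m + 2)) :=
    Equiv.ofBijective F₁ ⟨hF₁inj, hF₁s⟩ with he₁def
  have he₁ : ∀ z, F₁ (e₁.symm z) = z := fun z => e₁.apply_symm_apply z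
  have hF₂inj : Function.Injective F₂ := by
    intro u w h
    have h1 := hF₂ u w
    rw [h, dist_self] at h1
    have h2 : dist u w = 0 := by
      rcases mul_eq_zero.mp h1.symm with h3 | h3
      · exact absurd h3 hlam₂.ne'
      · exact h3
    exact dist_eq_zero.mp h2
  set e₂ : EuclideanSpace ℝ (Fin (m + 2)) ≃ EuclideanSpace ℝ (Fin (m + 2)) :=
    Equiv.ofBijective F₂ ⟨hF₂inj, hF₂s⟩ with he₂def
  -- the isometry g = F₁⁻¹ ∘ F₂
  have hgiso : ∀ u w : EuclideanSpace ℝ (Fin (m + 2)),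
      dist (e₁.symm (F₂ u)) (e₁.symm (F₂ w)) = dist u w := by
    intro u w
    have h1 : lam₁ * dist (e₁.symm (F₂ u)) (e₁.symm (F₂ w)) = dist (F₂ u) (F₂ w) := by
      rw [← hF₁, he₁, he₁]
    rw [hF₂, ← hlam] at h1
    exact mul_left_cancel₀ hlam₁.ne' h1
  set g : EuclideanSpace ℝ (Fin (m + 2)) ≃ᵢ EuclideanSpace ℝ (Fin (m + 2)) :=
    { toEquiv := e₂.trans e₁.symm
      isometry_toFun := Isometry.of_dist_eq hgiso } with hgdef2
  have hgdef : ∀ z, g z = e₁.symm (F₂ z) := fun z => rfl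
  have hFg : ∀ z, F₁ (g z) = F₂ z := fun z => he₁ (F₂ z)
  have hgP : ∀ i, i ≠ (0 : Fin (m + 3)) → g (P i) = P i := by
    intro i hi
    have h1 : F₂ (P i) = F₁ (P i) := by rw [hmap₁ i hi, hmap₂ i hi]
    rw [hgdef, h1]
    exact e₁.symm_apply_apply (P i)
  -- Mazur-Ulam: g is affine, with linear part f
  set gA := g.toRealAffineIsometryEquiv with hgA
  set f := gA.linearIsometryEquiv with hf
  have hgcoe : ∀ z, gA z = g z := fun z =>
    congrFun (IsometryEquiv.coeFn_toRealAffineIsometryEquiv g) z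
  have hgaff : ∀ z w, g z - g w = f (z - w) := by
    intro z w
    have h1 := gA.map_vsub z w
    rw [hgcoe, hgcoe] at h1
    exact h1.symm
  have hfD : ∀ i, i ≠ (0 : Fin (m + 3)) → f (P i - P 1) = P i - P 1 := by
    intro i hi
    rw [← hgaff, hgP i hi, hgP 1 h10]
  set W := Submodule.span ℝ {w | ∃ i, i ≠ (0 : Fin (m + 3)) ∧ w = P i - P 1} with hW
  have hWfix : ∀ w ∈ W, f w = w := by
    intro w hw
    induction hw using Submodule.span_induction with
    | mem z hz => obtain ⟨i, hi, rfl⟩ := hz; exact hfD i hi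
    | zero => exact map_zero f
    | add z₁ z₂ _ _ ih₁ ih₂ => rw [map_add, ih₁, ih₂]
    | smul r z _ ih => rw [map_smul, ih]
  have hWa : ∀ w ∈ W, ⟪a, w⟫ = 0 := by
    intro w hw
    induction hw using Submodule.span_induction with
    | mem z hz =>
      obtain ⟨i, hi, rfl⟩ := hz
      have h1 : P i - P 1 = (P i - p) - (P 1 - p) := by abel
      rw [real_inner_comm, h1, inner_sub_left, hPhalf i hi, hPhalf 1 h10, sub_self]
    | zero => exact inner_zero_right a
    | add z₁ z₂ _ _ ih₁ ih₂ => rw [inner_add_right, ih₁, ih₂, add_zero]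
    | smul r z _ ih => rw [real_inner_smul_right, ih, mul_zero]
  -- core orthogonality fact, via circumcenter uniqueness
  have hbot : ∀ b : EuclideanSpace ℝ (Fin (m + 2)),
      (∀ i, i ≠ (0 : Fin (m + 3)) → ⟪P i - P 1, b⟫ = 0) → ⟪a, b⟫ = 0 → b = 0 := by
    intro b hb hab
    set β := ⟪P 1 - p, b⟫ with hβ
    have hball : ∀ i, i ≠ (0 : Fin (m + 3)) → ⟪P i - p, b⟫ = β := by
      intro i hi
      have h1 := hb i hi
      have h2 : P i - P 1 = (P i - p) - (P 1 - p) := by abel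
      rw [h2, inner_sub_left] at h1
      rw [hβ]; linarith
    have hvb : ∀ i, ⟪v i - p, b⟫ = β * ‖v i - p‖ ^ 2 := by
      intro i
      by_cases hi : i = 0
      · subst hi
        rw [hp] at *
        simp
      · have hvip : v i ≠ p := hvne i hi
        have hd : (0:ℝ) < ‖v i - p‖ ^ 2 := pow_pos (norm_pos_iff.mpr (sub_ne_zero.mpr hvip)) 2
        have h1 := hball i hi
        have h2 : P i - p = ((1:ℝ) ^ 2 / ‖v i - p‖ ^ 2) • (v i - p) := sphInv_sub p 1 (v i)
        rw [h2, real_inner_smul_left, one_pow, one_div,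
          inv_mul_eq_iff_eq_mul₀ hd.ne'] at h1
        rw [h1]; ring
    by_cases hβ0 : β = 0
    · -- all vertices in a hyperplane through p: contradiction with full span unless b = 0
      have hsub : Set.range v ⊆ (AffineSubspace.mk' p ((ℝ ∙ b)ᗮ) : Set (EuclideanSpace ℝ (Fin (m + 2)))) := by
        rintro _ ⟨i, rfl⟩
        refine AffineSubspace.mem_mk'.mpr ?_
        refine Submodule.mem_orthogonal_singleton_iff_inner_left.mpr ?_
        show ⟪v i - p, b⟫ = 0
        rw [hvb i, hβ0, zero_mul]
      have htop : affineSpan ℝ (Set.range v) ≤ AffineSubspace.mk' p ((ℝ ∙ b)ᗮ) :=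
        affineSpan_le.mpr hsub
      rw [hspan] at htop
      have hmem : p + b ∈ AffineSubspace.mk' p ((ℝ ∙ b)ᗮ) := htop trivial
      have hb' : b ∈ (ℝ ∙ b)ᗮ := by
        have h1 := AffineSubspace.mem_mk'.mp hmem
        simpa using h1
      have hbb : ⟪b, b⟫ = 0 := Submodule.mem_orthogonal_singleton_iff_inner_left.mp hb'
      exact inner_self_eq_zero.mp hbb
    · -- all vertices on a sphere centered at p + b/(2β): that center is the circumcenter
      set c := p + (1 / (2 * β)) • b with hc
      set r := ‖b‖ / (2 * |β|) with hr
      have hdc : ∀ i, dist (v i) c = r := by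
        intro i
        have h1 : dist (v i) c ^ 2 = r ^ 2 := by
          have h2 : v i - (p + (1 / (2 * β)) • b) = (v i - p) - (1 / (2 * β)) • b := by abel
          rw [dist_eq_norm, h2, norm_sub_sq_real, real_inner_smul_right, hvb i, norm_smul,
            Real.norm_eq_abs, hr]
          simp only [mul_pow, div_pow, sq_abs]
          field_simp
          ring
        have h2 : 0 ≤ dist (v i) c := dist_nonneg
        have h3 : 0 ≤ r := by positivity
        have h4 : (dist (v i) c - r) * (dist (v i) c + r) = 0 := by nlinarith [h1]
        rcases mul_eq_zero.mp h4 with h5 | h5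
        · linarith
        · linarith
      have hco : c = o := by
        refine σ.eq_circumcenter_of_dist_eq ?_ hdc
        rw [hspan]; trivial
      have hab2 : a = (1 / (2 * β)) • b := by
        rw [ha, ← hco, hc, add_sub_cancel_left]
      rw [hab2, real_inner_smul_left] at hab
      rcases mul_eq_zero.mp hab with h3 | h3
      · exfalso
        rw [div_eq_zero_iff] at h3
        rcases h3 with h4 | h4
        · norm_num at h4
        · exact hβ0 (by linarith [mul_eq_zero.mp h4])
      · exact inner_self_eq_zero.mp h3
  -- W together with the span of a is everything
  have hsup : W ⊔ (ℝ ∙ a) = ⊤ := by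
    have horth : (W ⊔ (ℝ ∙ a))ᗮ = ⊥ := by
      rw [Submodule.eq_bot_iff]
      intro b hb
      rw [Submodule.mem_orthogonal] at hb
      refine hbot b ?_ ?_
      · intro i hi
        exact hb _ (Submodule.mem_sup_left (Submodule.subset_span ⟨i, hi, rfl⟩))
      · exact hb a (Submodule.mem_sup_right (Submodule.mem_span_singleton_self a))
    exact Submodule.orthogonal_eq_bot_iff.mp horth
  have hdecomp : ∀ z : EuclideanSpace ℝ (Fin (m + 2)), ∃ w ∈ W, ∃ s : ℝ, z = w + s • a := by
    intro z
    have hz : z ∈ W ⊔ (ℝ ∙ a) := by rw [hsup]; trivial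
    obtain ⟨w, hw, u, hu, rfl⟩ := Submodule.mem_sup.mp hz
    obtain ⟨s, rfl⟩ := Submodule.mem_span_singleton.mp hu
    exact ⟨w, hw, s, rfl⟩
  -- f a = -a
  have hfaW : ∀ w ∈ W, ⟪f a, w⟫ = 0 := by
    intro w hw
    have h1 : ⟪f a, f w⟫ = ⟪a, w⟫ := f.inner_map_map a w
    rw [hWfix w hw] at h1
    rw [h1]
    exact hWa w hw
  have hfa : f a = a ∨ f a = -a := by
    obtain ⟨w, hw, s, hws⟩ := hdecomp (f a)
    have hw0 : w = 0 := by
      have h1 : ⟪f a, w⟫ = 0 := hfaW w hw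
      rw [hws, inner_add_left, real_inner_smul_left, hWa w hw,
        mul_zero, add_zero] at h1
      exact inner_self_eq_zero.mp h1
    rw [hw0, zero_add] at hws
    have hnorm : ‖f a‖ = ‖a‖ := f.norm_map a
    rw [hws, norm_smul, Real.norm_eq_abs] at hnorm
    have hs1 : |s| = 1 := by
      have hane : ‖a‖ ≠ 0 := norm_ne_zero_iff.mpr ha0
      have h1 : |s| * ‖a‖ = 1 * ‖a‖ := by rw [hnorm, one_mul]
      exact mul_right_cancel₀ hane h1
    rcases abs_eq (by norm_num : (0:ℝ) ≤ 1) |>.mp hs1 with h | h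
    · left; rw [hws, h, one_smul]
    · right; rw [hws, h, neg_one_smul]
  have hfneg : f a = -a := by
    rcases hfa with h | h
    · exfalso
      apply hne
      have hfid : ∀ z, f z = z := by
        intro z
        obtain ⟨w, hw, s, rfl⟩ := hdecomp z
        rw [map_add, map_smul, hWfix w hw, h]
      have hgid : ∀ z, g z = z := by
        intro z
        have h1 := hgaff z (P 1)
        rw [hfid, hgP 1 h10] at h1
        exact sub_left_injective h1
      funext z
      rw [← hFg z, hgid z]
    · exact h
  -- explicit formula for g: reflection in the hyperplane ⟪y - p, a⟫ = 1/2
  have hgform : ∀ z, g z = z - ((2 * ⟪z - p, a⟫ - 1) / R ^ 2) • a := by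
    intro z
    obtain ⟨w, hw, s, hws⟩ := hdecomp (z - P 1)
    have h1 : g z = f (z - P 1) + P 1 := by
      have h2 := hgaff z (P 1)
      rw [hgP 1 h10] at h2
      rw [← h2]; abel
    have hsa : ⟪z - P 1, a⟫ = s * R ^ 2 := by
      rw [hws, inner_add_left, real_inner_smul_left, haa, real_inner_comm a w, hWa w hw,
        zero_add]
    have hza : ⟪z - p, a⟫ = s * R ^ 2 + 1 / 2 := by
      have h2 : z - p = (z - P 1) + (P 1 - p) := by abel
      rw [h2, inner_add_left, hsa, hPhalf 1 h10]
    have hcoef : (2 * ⟪z - p, a⟫ - 1) / R ^ 2 = 2 * s := by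
      rw [hza]
      field_simp
      ring
    have hz' : z = w + s • a + P 1 := by
      rw [← hws]; abel
    rw [h1, hws, map_add, map_smul, hWfix w hw, hfneg, hcoef, hz']
    module
  -- conclusion
  suffices hsuf : F₂ (sphInv p 1 x) = F₁ (sphInv p 1 (sphInv o R x)) by rw [hsuf]
  rw [← hFg (sphInv p 1 x)]
  refine congrArg F₁ ?_
  rw [hgform (sphInv p 1 x), ha]
  exact (sphInv_conj p o x hRpos hpo hxp hxo).symm
end
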